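/- arXiv:2508.08853 — 2 statements merged into one kernel-verified Lean document; each statement's English description precedes it below -/
import Mathlib

section
/- Let G be a connected non-complete graph of order at least 3 and let H be a connected graph of order m. Let k be the maximum integer such that there exists a minimum vertex cut A ⊆ V(G) of G with the property that every connected component of G − A contains at least k+1 vertices. Then for every nonnegative integer g with g+1 ≤ (k+1) + k·m + δ(G)·m, one has κ_g(G ◇ H) = 1 if and only if κ(G) = 1. -/
open SimpleGraph

namespace ExtraConn

variable {V W : Type*}

/-- `S` is an `R_g` vertex cut: deleting `S` disconnects the graph and every
connected component of the remainder has at least `g+1` vertices. -/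
def IsRgVertexCut (G : SimpleGraph V) (g : ℕ) (S : Set V) : Prop :=
  ¬ (G.induce Sᶜ).Preconnected ∧
    ∀ c : (G.induce Sᶜ).ConnectedComponent,
      g + 1 ≤ Nat.card {v : ↥Sᶜ // (G.induce Sᶜ).connectedComponentMk v = c}

/-- The `g`-extra vertex connectivity `κ_g(G)` (`⊤` if no `R_g` vertex cut exists). -/
noncomputable def kappaG (G : SimpleGraph V) (g : ℕ) : ℕ∞ :=
  sInf {n : ℕ∞ | ∃ S : Finset V, IsRgVertexCut G g ↑S ∧ (S.card : ℕ∞) = n}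

/-- `S` is a vertex cut of `G`. -/
def IsVertexCut (G : SimpleGraph V) (S : Set V) : Prop :=
  ¬ (G.induce Sᶜ).Preconnected

/-- The vertex connectivity `κ(G)` (for graphs admitting a vertex cut). -/
noncomputable def kappa (G : SimpleGraph V) : ℕ :=
  sInf {n : ℕ | ∃ S : Finset V, IsVertexCut G ↑S ∧ S.card = n}

/-- `S` is a minimum vertex cut of `G`. -/
def IsMinVertexCut (G : SimpleGraph V) (S : Finset V) : Prop :=
  IsVertexCut G ↑S ∧ S.card = kappa G

/-- Deleting the vertex set `↑A` leaves only components with at least `k+1` vertices. -/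
def CutBound (G : SimpleGraph V) (A : Finset V) (k : ℕ) : Prop :=
  ∀ c : (G.induce (↑A : Set V)ᶜ).ConnectedComponent,
    k + 1 ≤ Nat.card {v // (G.induce (↑A : Set V)ᶜ).connectedComponentMk v = c}

/-- `F` is an `R_g` edge cut. -/
def IsRgEdgeCut (G : SimpleGraph V) (g : ℕ) (F : Set (Sym2 V)) : Prop :=
  F ⊆ G.edgeSet ∧ ¬ (G.deleteEdges F).Preconnected ∧
    ∀ c : (G.deleteEdges F).ConnectedComponent,
      g + 1 ≤ Nat.card {v : V // (G.deleteEdges F).connectedComponentMk v = c}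

/-- The `g`-extra edge connectivity `λ_g(G)`. -/
noncomputable def lambdaG (G : SimpleGraph V) (g : ℕ) : ℕ∞ :=
  sInf {n : ℕ∞ | ∃ F : Finset (Sym2 V), IsRgEdgeCut G g ↑F ∧ (F.card : ℕ∞) = n}

/-- The edge connectivity `λ(G)`. -/
noncomputable def lambda (G : SimpleGraph V) : ℕ :=
  sInf {n : ℕ | ∃ F : Finset (Sym2 V), ↑F ⊆ G.edgeSet ∧
    ¬ (G.deleteEdges ↑F).Preconnected ∧ F.card = n}

/-- The edge corona `G ◇ H`. -/
def edgeCorona (G : SimpleGraph V) (H : SimpleGraph W) :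
    SimpleGraph (V ⊕ (G.edgeSet × W)) where
  Adj a b :=
    match a, b with
    | .inl u, .inl v => G.Adj u v
    | .inl u, .inr ew => u ∈ (ew.1 : Sym2 V)
    | .inr ew, .inl v => v ∈ (ew.1 : Sym2 V)
    | .inr ew, .inr ew' => ew.1 = ew'.1 ∧ H.Adj ew.2 ew'.2
  symm := by
    constructor
    rintro (u | ⟨e, w⟩) (v | ⟨e', w'⟩) h
    · exact h.symm
    · exact h
    · exact h
    · exact ⟨h.1.symm, h.2.symm⟩
  loopless := by
    constructor
    rintro (u | ⟨e, w⟩) h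
    · exact G.loopless.irrefl u h
    · exact H.loopless.irrefl w h.2

/-- The neighbourhood corona `G * H`. -/
def neighbourhoodCorona (G : SimpleGraph V) (H : SimpleGraph W) :
    SimpleGraph (V ⊕ (V × W)) where
  Adj a b :=
    match a, b with
    | .inl u, .inl v => G.Adj u v
    | .inl u, .inr iw => G.Adj u iw.1
    | .inr iw, .inl v => G.Adj v iw.1
    | .inr iw, .inr iw' => iw.1 = iw'.1 ∧ H.Adj iw.2 iw'.2
  symm := by
    constructor
    rintro (u | ⟨i, w⟩) (v | ⟨i', w'⟩) h
    · exact h.symm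
    · exact h
    · exact h
    · exact ⟨h.1.symm, h.2.symm⟩
  loopless := by
    constructor
    rintro (u | ⟨i, w⟩) h
    · exact G.loopless.irrefl u h
    · exact H.loopless.irrefl w h.2

/-- The subdivision graph `S(G)`. -/
def subdivision (G : SimpleGraph V) : SimpleGraph (V ⊕ G.edgeSet) where
  Adj a b :=
    match a, b with
    | .inl u, .inr e => u ∈ (e : Sym2 V)
    | .inr e, .inl u => u ∈ (e : Sym2 V)
    | _, _ => False
  symm := by
    constructor
    rintro (u | e) (v | e') h
    · exact h.elim
    · exact h
    · exact h
    · exact h.elim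
  loopless := by
    constructor
    rintro (u | e) h <;> exact h.elim

/-- The subdivision vertex neighbourhood corona `G ⊡ H`. -/
def subdivisionVertexNC (G : SimpleGraph V) (H : SimpleGraph W) :
    SimpleGraph ((V ⊕ G.edgeSet) ⊕ (V × W)) where
  Adj a b :=
    match a, b with
    | .inl x, .inl y => (subdivision G).Adj x y
    | .inl (.inr e), .inr iw => iw.1 ∈ (e : Sym2 V)
    | .inr iw, .inl (.inr e) => iw.1 ∈ (e : Sym2 V)
    | .inr iw, .inr iw' => iw.1 = iw'.1 ∧ H.Adj iw.2 iw'.2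
    | _, _ => False
  symm := by
    constructor
    rintro ((u | e) | ⟨i, w⟩) ((v | e') | ⟨i', w'⟩) h
    · exact h.elim
    · exact h
    · exact h.elim
    · exact h
    · exact h.elim
    · exact h
    · exact h.elim
    · exact h
    · exact ⟨h.1.symm, h.2.symm⟩
  loopless := by
    constructor
    rintro ((u | e) | ⟨i, w⟩) h
    · exact h.elim
    · exact h.elim
    · exact H.loopless.irrefl w h.2

/-- The subdivision edge neighbourhood corona `G ⊟ H`. -/
def subdivisionEdgeNC (G : SimpleGraph V) (H : SimpleGraph W) :
    SimpleGraph ((V ⊕ G.edgeSet) ⊕ (G.edgeSet × W)) where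
  Adj a b :=
    match a, b with
    | .inl x, .inl y => (subdivision G).Adj x y
    | .inl (.inl u), .inr ew => u ∈ (ew.1 : Sym2 V)
    | .inr ew, .inl (.inl u) => u ∈ (ew.1 : Sym2 V)
    | .inr ew, .inr ew' => ew.1 = ew'.1 ∧ H.Adj ew.2 ew'.2
    | _, _ => False
  symm := by
    constructor
    rintro ((u | e) | ⟨e₀, w⟩) ((v | e') | ⟨e₀', w'⟩) h
    · exact h.elim
    · exact h
    · exact h
    · exact h
    · exact h.elim
    · exact h.elim
    · exact h
    · exact h.elim
    · exact ⟨h.1.symm, h.2.symm⟩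
  loopless := by
    constructor
    rintro ((u | e) | ⟨e₀, w⟩) h
    · exact h.elim
    · exact h.elim
    · exact H.loopless.irrefl w h.2

/-- The generalized corona `G ∘ ⋀ᵢ Hᵢ`. -/
def genCorona (G : SimpleGraph V) {W : V → Type*} (H : ∀ v, SimpleGraph (W v)) :
    SimpleGraph (V ⊕ (Σ v, W v)) where
  Adj a b :=
    match a, b with
    | .inl u, .inl v => G.Adj u v
    | .inl u, .inr p => u = p.1
    | .inr p, .inl v => v = p.1
    | .inr p, .inr q =>
        ∃ (v : V) (w w' : W v), p = ⟨v, w⟩ ∧ q = ⟨v, w'⟩ ∧ (H v).Adj w w'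
  symm := by
    constructor
    rintro (u | p) (v | q) h
    · exact h.symm
    · exact h
    · exact h
    · obtain ⟨v, w, w', rfl, rfl, hadj⟩ := h
      exact ⟨v, w', w, rfl, rfl, hadj.symm⟩
  loopless := by
    constructor
    rintro (u | p) h
    · exact G.loopless.irrefl u h
    · obtain ⟨v, w, w', rfl, h2, hadj⟩ := h
      obtain rfl : w = w' := by simpa using h2
      exact (H v).loopless.irrefl w hadj

/-- The rooted product `H(G)` with root `r`. -/
def rootedProduct (G : SimpleGraph V) (H : SimpleGraph W) (r : W) :
    SimpleGraph (V × W) where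
  Adj a b := (a.1 = b.1 ∧ H.Adj a.2 b.2) ∨ (a.2 = r ∧ b.2 = r ∧ G.Adj a.1 b.1)
  symm := by
    constructor
    rintro ⟨x, y⟩ ⟨x', y'⟩ (⟨h1, h2⟩ | ⟨h1, h2, h3⟩)
    · exact Or.inl ⟨h1.symm, h2.symm⟩
    · exact Or.inr ⟨h2, h1, h3.symm⟩
  loopless := by
    constructor
    rintro ⟨x, y⟩ (⟨-, h⟩ | ⟨-, -, h⟩)
    · exact H.loopless.irrefl y h
    · exact G.loopless.irrefl x h

/-!
A one-vertex cut of `G ◇ H` must be a vertex `x` of `G` whose deletion disconnects `G`: after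
deleting a vertex of a copy of `H`, or a vertex `x` of `G` with `G - x` connected, every remaining
vertex is equal or adjacent to a vertex of the connected graph `G` (resp. `G - x`). Conversely, a
cut vertex `x` of `G` from a minimum cut with components of size `≥ k + 1` cuts `G ◇ H`, and each
component of `G ◇ H - x` contains a component `C` of `G - x` together with the `m` vertices of
the copy of `H` on each of the at least `|C| - 1 + δ(G)` edges meeting `C`. So every component has
at least `(k + 1) + (k + δ(G)) m ≥ g + 1` vertices.
-/

section Connectivity

variable {α β : Type*} {Γ : SimpleGraph α}

theorem reachable_map_of_adj_reachable {Γ' : SimpleGraph β} (f : α → β)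
    (hf : ∀ a b, Γ.Adj a b → Γ'.Reachable (f a) (f b)) {a b : α} (h : Γ.Reachable a b) :
    Γ'.Reachable (f a) (f b) := by
  rw [reachable_iff_reflTransGen] at h ⊢
  exact Relation.ReflTransGen.lift' f
    (fun a b hab => (reachable_iff_reflTransGen _ _).1 (hf a b hab)) a b h

theorem nonempty_of_not_preconnected_induce_compl (hΓ : Γ.Preconnected) {S : Finset α}
    (hS : ¬ (Γ.induce (S : Set α)ᶜ).Preconnected) : S.Nonempty := by
  rw [Finset.nonempty_iff_ne_empty]
  rintro rfl
  rw [Finset.coe_empty, Set.compl_empty, (induceUnivIso Γ).preconnected_iff] at hS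
  exact hS hΓ

theorem card_le_card_connectedComponent_of_injective [Finite α] {S : Set α}
    (c : (Γ.induce S).ConnectedComponent) (f : β → α) (hf : Function.Injective f)
    (hfc : ∀ b, ∃ h : f b ∈ S, (Γ.induce S).connectedComponentMk ⟨f b, h⟩ = c) :
    Nat.card β ≤ Nat.card {v : S // (Γ.induce S).connectedComponentMk v = c} :=
  Nat.card_le_card_of_injective (fun b => ⟨⟨f b, (hfc b).1⟩, (hfc b).2⟩)
    fun _ _ h => hf (congrArg (fun v => v.1.1) h)

theorem kappaG_eq_one_iff (hΓ : Γ.Preconnected) (g : ℕ) :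
    kappaG Γ g = 1 ↔ ∃ z, IsRgVertexCut Γ g {z} := by
  constructor
  · intro h
    have hne : {n : ℕ∞ | ∃ S : Finset α, IsRgVertexCut Γ g ↑S ∧ (S.card : ℕ∞) = n}.Nonempty := by
      by_contra hemp
      rw [Set.not_nonempty_iff_eq_empty] at hemp
      simp [kappaG, hemp] at h
    obtain ⟨S, hS, hcard⟩ : kappaG Γ g ∈ _ := csInf_mem hne
    rw [h] at hcard
    obtain ⟨z, rfl⟩ := Finset.card_eq_one.1 (by exact_mod_cast hcard)
    exact ⟨z, by simpa using hS⟩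
  · rintro ⟨z, hz⟩
    refine le_antisymm (sInf_le ⟨{z}, by simpa using hz, by simp⟩) (le_sInf ?_)
    rintro _ ⟨S, hS, rfl⟩
    exact_mod_cast (nonempty_of_not_preconnected_induce_compl hΓ hS.1).card_pos

theorem kappa_eq_one_of_isVertexCut_singleton (hΓ : Γ.Preconnected) {x : α}
    (hx : IsVertexCut Γ {x}) : kappa Γ = 1 := by
  have hmem : 1 ∈ {n : ℕ | ∃ S : Finset α, IsVertexCut Γ ↑S ∧ S.card = n} :=
    ⟨{x}, by simpa using hx, Finset.card_singleton x⟩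
  refine le_antisymm (Nat.sInf_le hmem) ?_
  obtain ⟨S, hS, hcard⟩ := Nat.sInf_mem ⟨1, hmem⟩
  rw [kappa, ← hcard]
  exact (nonempty_of_not_preconnected_induce_compl hΓ hS).card_pos

end Connectivity

section Edges

variable (G : SimpleGraph V)

theorem exists_mem_ne_of_mem_edgeSet {e : Sym2 V} (he : e ∈ G.edgeSet) (x : V) :
    ∃ u ∈ e, u ≠ x := by
  induction e using Sym2.ind with
  | h u v =>
    rcases eq_or_ne u x with rfl | hu
    · exact ⟨v, Sym2.mem_mk_right _ _, (G.ne_of_adj he).symm⟩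
    · exact ⟨u, Sym2.mem_mk_left _ _, hu⟩

theorem reachable_induce_of_mem_edgeSet {s : Set V} {e : Sym2 V} (he : e ∈ G.edgeSet) {u v : V}
    (hu : u ∈ s) (hv : v ∈ s) (hue : u ∈ e) (hve : v ∈ e) :
    (G.induce s).Reachable ⟨u, hu⟩ ⟨v, hv⟩ := by
  by_cases huv : u = v
  · subst huv
    rfl
  · exact Adj.reachable (G.adj_iff_exists_edge.2 ⟨huv, e, he, hue, hve⟩)

theorem exists_adj_dist_lt (hG : G.Preconnected) {v x : V} (hvx : v ≠ x) :
    ∃ p, G.Adj v p ∧ G.dist p x < G.dist v x := by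
  obtain ⟨w, hw⟩ := (hG v x).exists_walk_length_eq_dist
  cases w with
  | nil => exact absurd rfl hvx
  | cons h q =>
    refine ⟨_, h, ?_⟩
    have := dist_le q
    rw [Walk.length_cons] at hw
    omega

theorem ncard_incidenceSet [Fintype V] [DecidableRel G.Adj] (v : V) :
    (G.incidenceSet v).ncard = G.degree v := by
  classical
  rw [← Nat.card_coe_set_eq, Nat.card_eq_fintype_card, card_incidenceSet_eq_degree]

/-- Joining every `v ∈ C` to a neighbour closer to `x` gives `|C|` distinct edges; at a vertex of
`C` farthest from `x`, all edges but one are not among these. -/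
theorem ncard_add_minDegree_le_ncard_biUnion_incidenceSet_add_one [Fintype V] [DecidableRel G.Adj]
    (hG : G.Preconnected) {x : V} {C : Set V} (hC : C.Nonempty) (hxC : x ∉ C) :
    C.ncard + G.minDegree ≤ (⋃ v ∈ C, G.incidenceSet v).ncard + 1 := by
  have hpar : ∀ v : C, ∃ p, G.Adj v p ∧ G.dist p x < G.dist v x :=
    fun v => exists_adj_dist_lt G hG (ne_of_mem_of_not_mem v.2 hxC)
  choose par hadj hdist using hpar
  let F : C → Sym2 V := fun v => s(v, par v)
  have hF : F.Injective := by
    intro v w h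
    rcases Sym2.eq_iff.1 h with ⟨h1, -⟩ | ⟨h1, h2⟩
    · exact Subtype.ext h1
    · have hv := hdist v
      have hw := hdist w
      rw [h2] at hv
      rw [← h1] at hw
      omega
  obtain ⟨y, hyC, hymax⟩ := Set.exists_max_image C (G.dist · x) C.toFinite hC
  have hFy : F ⟨y, hyC⟩ ∈ G.incidenceSet y := ⟨hadj ⟨y, hyC⟩, Sym2.mem_mk_left _ _⟩
  have hdisj : Disjoint (Set.range F) (G.incidenceSet y \ {F ⟨y, hyC⟩}) := by
    rw [Set.disjoint_left]
    rintro _ ⟨v, rfl⟩ ⟨⟨-, hy⟩, hne⟩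
    rcases Sym2.mem_iff.1 hy with rfl | rfl
    · exact hne rfl
    · have := hdist v
      have := hymax v v.2
      omega
  have hsub : Set.range F ∪ (G.incidenceSet y \ {F ⟨y, hyC⟩}) ⊆ ⋃ v ∈ C, G.incidenceSet v := by
    rintro _ (⟨v, rfl⟩ | ⟨he, -⟩)
    · exact Set.mem_biUnion v.2 ⟨hadj v, Sym2.mem_mk_left _ _⟩
    · exact Set.mem_biUnion hyC he
  have hcard := Set.ncard_le_ncard hsub (Set.toFinite _)
  rw [Set.ncard_union_eq hdisj, Set.ncard_range_of_injective hF,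
    Set.ncard_sdiff_singleton_of_mem hFy, ncard_incidenceSet, Nat.card_coe_set_eq] at hcard
  have := G.minDegree_le_degree y
  omega

end Edges

section EdgeCorona

variable (G : SimpleGraph V) (H : SimpleGraph W)

def edgeCoronaInlHom : G →g edgeCorona G H := ⟨Sum.inl, id⟩

theorem edgeCorona_induce_preconnected {T : Set V} {S : Set (V ⊕ (G.edgeSet × W))}
    (hT : (G.induce T).Preconnected) (hTS : Set.MapsTo Sum.inl T S)
    (hinl : ∀ u, Sum.inl u ∈ S → u ∈ T)
    (hinr : ∀ e w, Sum.inr (e, w) ∈ S → ∃ u ∈ T, u ∈ (e : Sym2 V)) :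
    ((edgeCorona G H).induce S).Preconnected := by
  let φ := induceHom (edgeCoronaInlHom G H) hTS
  have hφ : ∀ z : S, ∃ u : T, ((edgeCorona G H).induce S).Reachable z (φ u) := by
    rintro ⟨u | ⟨e, w⟩, hz⟩
    · exact ⟨⟨u, hinl u hz⟩, Reachable.refl _⟩
    · obtain ⟨u, hu, hue⟩ := hinr e w hz
      exact ⟨⟨u, hu⟩, Adj.reachable (show u ∈ (e : Sym2 V) from hue)⟩
  intro a b
  obtain ⟨u, hu⟩ := hφ a
  obtain ⟨v, hv⟩ := hφ b
  exact hu.trans (((hT u v).map φ).trans hv.symm)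

theorem edgeCorona_preconnected (hG : G.Preconnected) : (edgeCorona G H).Preconnected := by
  rw [← (induceUnivIso _).preconnected_iff]
  exact edgeCorona_induce_preconnected G H ((induceUnivIso G).preconnected_iff.2 hG)
    (Set.mapsTo_univ _ _) (fun _ _ => trivial)
    fun e _ _ => ⟨_, trivial, Sym2.out_fst_mem (e : Sym2 V)⟩

theorem edgeCorona_induce_compl_inr_preconnected (hG : G.Preconnected) (e : G.edgeSet) (w : W) :
    ((edgeCorona G H).induce {Sum.inr (e, w)}ᶜ).Preconnected :=
  edgeCorona_induce_preconnected G H ((induceUnivIso G).preconnected_iff.2 hG)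
    (fun _ _ => Sum.inl_ne_inr) (fun _ _ => trivial)
    fun e _ _ => ⟨_, trivial, Sym2.out_fst_mem (e : Sym2 V)⟩

/-- A retraction of `G ◇ H - x` onto `G - x`. -/
noncomputable def edgeCoronaProj (x : V) : V ⊕ (G.edgeSet × W) → V :=
  Sum.elim id fun p => (exists_mem_ne_of_mem_edgeSet G p.1.2 x).choose

theorem edgeCoronaProj_mem_compl {x : V} {z : V ⊕ (G.edgeSet × W)}
    (hz : z ∈ ({Sum.inl x}ᶜ : Set (V ⊕ (G.edgeSet × W)))) :
    edgeCoronaProj G x z ∈ ({x}ᶜ : Set V) := by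
  rcases z with u | p
  · exact fun h => hz (congrArg Sum.inl h)
  · exact (exists_mem_ne_of_mem_edgeSet G p.1.2 x).choose_spec.2

theorem edgeCoronaProj_inr_mem (x : V) (p : G.edgeSet × W) :
    edgeCoronaProj G x (Sum.inr p) ∈ (p.1 : Sym2 V) :=
  (exists_mem_ne_of_mem_edgeSet G p.1.2 x).choose_spec.1

theorem eq_or_adj_inl_edgeCoronaProj (x : V) (z : V ⊕ (G.edgeSet × W)) :
    z = Sum.inl (edgeCoronaProj G x z) ∨
      (edgeCorona G H).Adj z (Sum.inl (edgeCoronaProj G x z)) := by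
  rcases z with u | p
  · exact Or.inl rfl
  · exact Or.inr (edgeCoronaProj_inr_mem G x p)

theorem exists_edge_mem_edgeCoronaProj_of_adj (x : V) {a b : V ⊕ (G.edgeSet × W)}
    (hab : (edgeCorona G H).Adj a b) :
    ∃ e ∈ G.edgeSet, edgeCoronaProj G x a ∈ e ∧ edgeCoronaProj G x b ∈ e := by
  rcases a with u | ⟨e, w⟩ <;> rcases b with v | ⟨e', w'⟩
  · exact ⟨s(u, v), hab, Sym2.mem_mk_left _ _, Sym2.mem_mk_right _ _⟩
  · exact ⟨e', e'.2, hab, edgeCoronaProj_inr_mem G x _⟩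
  · exact ⟨e, e.2, edgeCoronaProj_inr_mem G x _, hab⟩
  · obtain ⟨rfl, -⟩ := hab
    exact ⟨e, e.2, edgeCoronaProj_inr_mem G x _, edgeCoronaProj_inr_mem G x _⟩

theorem edgeCorona_induce_compl_inl_preconnected_iff (x : V) :
    ((edgeCorona G H).induce {Sum.inl x}ᶜ).Preconnected ↔ (G.induce {x}ᶜ).Preconnected := by
  refine ⟨fun h u v => ?_, fun h => ?_⟩
  · let f : ({Sum.inl x}ᶜ : Set (V ⊕ (G.edgeSet × W))) → ({x}ᶜ : Set V) :=
      fun z => ⟨edgeCoronaProj G x z.1, edgeCoronaProj_mem_compl G z.2⟩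
    refine reachable_map_of_adj_reachable f (fun a b hab => ?_)
      (h ⟨Sum.inl u, fun h => u.2 (Sum.inl_injective h)⟩
        ⟨Sum.inl v, fun h => v.2 (Sum.inl_injective h)⟩)
    obtain ⟨e, he, hae, hbe⟩ := exists_edge_mem_edgeCoronaProj_of_adj G H x hab
    exact reachable_induce_of_mem_edgeSet G he _ _ hae hbe
  · refine edgeCorona_induce_preconnected G H h (fun _ hu h => hu (Sum.inl_injective h))
      (fun _ hu h => hu (congrArg Sum.inl h)) fun e _ _ => ?_
    obtain ⟨u, hue, hux⟩ := exists_mem_ne_of_mem_edgeSet G e.2 x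
    exact ⟨u, hux, hue⟩

def edgeCoronaInlHomCompl (x : V) :
    G.induce {x}ᶜ →g (edgeCorona G H).induce {Sum.inl x}ᶜ :=
  induceHom (edgeCoronaInlHom G H) fun _ hu h => hu (Sum.inl_injective h)

theorem surjective_map_edgeCoronaInlHomCompl (x : V) :
    Function.Surjective (ConnectedComponent.map (edgeCoronaInlHomCompl G H x)) := by
  intro c
  induction c using ConnectedComponent.ind with | h z => ?_
  refine ⟨(G.induce {x}ᶜ).connectedComponentMk ⟨_, edgeCoronaProj_mem_compl G z.2⟩, ?_⟩
  rw [ConnectedComponent.map_mk, ConnectedComponent.eq]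
  rcases eq_or_adj_inl_edgeCoronaProj G H x z.1 with h | h
  · have : edgeCoronaInlHomCompl G H x ⟨_, edgeCoronaProj_mem_compl G z.2⟩ = z :=
      Subtype.ext h.symm
    rw [this]
  · refine (Adj.reachable ?_).symm
    exact h

theorem le_card_connectedComponent_edgeCorona_induce_compl_inl [Fintype V] [DecidableRel G.Adj]
    [Finite W] (hG : G.Preconnected) {x : V} {k : ℕ}
    (hk : ∀ c : (G.induce {x}ᶜ).ConnectedComponent,
      k + 1 ≤ Nat.card {v // (G.induce {x}ᶜ).connectedComponentMk v = c})
    (c : ((edgeCorona G H).induce {Sum.inl x}ᶜ).ConnectedComponent) :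
    k + 1 + (k + G.minDegree) * Nat.card W ≤
      Nat.card {v // ((edgeCorona G H).induce {Sum.inl x}ᶜ).connectedComponentMk v = c} := by
  obtain ⟨c', rfl⟩ := surjective_map_edgeCoronaInlHomCompl G H x c
  obtain ⟨y, rfl⟩ := c'.exists_rep
  let C : Set V := {v | ∃ h : v ∈ ({x}ᶜ : Set V),
    (G.induce {x}ᶜ).connectedComponentMk ⟨v, h⟩ = (G.induce {x}ᶜ).connectedComponentMk y}
  let E : Set G.edgeSet := Subtype.val ⁻¹' ⋃ v ∈ C, G.incidenceSet v
  have hC : k + 1 ≤ C.ncard := by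
    rw [← Nat.card_coe_set_eq]
    exact (hk _).trans_eq (Nat.card_congr (Equiv.subtypeSubtypeEquivSubtypeExists _ _))
  have hE : C.ncard + G.minDegree ≤ E.ncard + 1 := by
    rw [Set.ncard_preimage_of_injective_subset_range Subtype.val_injective]
    · exact ncard_add_minDegree_le_ncard_biUnion_incidenceSet_add_one G hG ⟨y, y.2, rfl⟩
        fun ⟨h, _⟩ => h rfl
    · intro e he
      obtain ⟨v, -, he, -⟩ := Set.mem_iUnion₂.1 he
      exact ⟨⟨e, he⟩, rfl⟩
  have hCmem : ∀ v ∈ C, ∃ h : Sum.inl v ∈ ({Sum.inl x}ᶜ : Set (V ⊕ (G.edgeSet × W))),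
      ((edgeCorona G H).induce _).connectedComponentMk ⟨Sum.inl v, h⟩ =
        ((G.induce {x}ᶜ).connectedComponentMk y).map (edgeCoronaInlHomCompl G H x) := by
    rintro v ⟨hv, hvy⟩
    exact ⟨_, by rw [← hvy, ConnectedComponent.map_mk]; rfl⟩
  have hEmem : ∀ e ∈ E, ∀ w : W, ∃ h : Sum.inr (e, w) ∈ ({Sum.inl x}ᶜ : Set _),
      ((edgeCorona G H).induce _).connectedComponentMk ⟨Sum.inr (e, w), h⟩ =
        ((G.induce {x}ᶜ).connectedComponentMk y).map (edgeCoronaInlHomCompl G H x) := by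
    intro e he w
    obtain ⟨v, hvC, -, hve⟩ := Set.mem_iUnion₂.1 he
    obtain ⟨hv, hvc⟩ := hCmem v hvC
    refine ⟨Sum.inr_ne_inl, ?_⟩
    rw [← hvc, ConnectedComponent.eq]
    exact Adj.reachable hve
  have hcard := card_le_card_connectedComponent_of_injective _
    (Sum.map ((↑) : C → V) (Prod.map ((↑) : E → G.edgeSet) (id : W → W)))
    (Subtype.val_injective.sumMap (Subtype.val_injective.prodMap Function.injective_id))
    (Sum.rec (fun v => hCmem v v.2) fun p => hEmem p.1 p.1.2 p.2)
  rw [Nat.card_sum, Nat.card_prod, Nat.card_coe_set_eq, Nat.card_coe_set_eq] at hcard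
  have hEk : k + G.minDegree ≤ E.ncard := by omega
  exact le_trans (add_le_add hC (Nat.mul_le_mul_right _ hEk)) hcard

end EdgeCorona

theorem edgeCorona_kappaG_eq_one_iff_general {V W : Type*} [Fintype V] [Fintype W]
    (G : SimpleGraph V) [DecidableRel G.Adj] (H : SimpleGraph W)
    (hGconn : G.Connected) (m : ℕ) (hm : Fintype.card W = m) (k : ℕ)
    (hk : ∃ A : Finset V, IsMinVertexCut G A ∧ CutBound G A k)
    (g : ℕ) (hg : g + 1 ≤ (k + 1) + k * m + G.minDegree * m) :
    kappaG (edgeCorona G H) g = 1 ↔ kappa G = 1 := by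
  have hG := hGconn.preconnected
  rw [kappaG_eq_one_iff (edgeCorona_preconnected G H hG)]
  constructor
  · rintro ⟨x | ⟨e, w⟩, hcut⟩
    · exact kappa_eq_one_of_isVertexCut_singleton hG
        (mt (edgeCorona_induce_compl_inl_preconnected_iff G H x).2 hcut.1)
    · exact absurd (edgeCorona_induce_compl_inr_preconnected G H hG e w) hcut.1
  · intro hκ
    obtain ⟨A, ⟨hAcut, hAcard⟩, hAk⟩ := hk
    obtain ⟨x, rfl⟩ := Finset.card_eq_one.1 (hAcard.trans hκ)
    rw [IsVertexCut, Finset.coe_singleton] at hAcut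
    rw [CutBound, Finset.coe_singleton] at hAk
    refine ⟨Sum.inl x, mt (edgeCorona_induce_compl_inl_preconnected_iff G H x).1 hAcut,
      fun c => le_trans ?_ (le_card_connectedComponent_edgeCorona_induce_compl_inl G H hG hAk c)⟩
    rw [Nat.card_eq_fintype_card, hm, add_mul]
    omega

theorem edgeCorona_kappaG_eq_one_iff {V W : Type*} [Fintype V] [Fintype W] [DecidableEq V]
    (G : SimpleGraph V) [DecidableRel G.Adj] (H : SimpleGraph W)
    (hGconn : G.Connected) (hGnc : G ≠ ⊤) (hV : 3 ≤ Fintype.card V)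
    (hHconn : H.Connected) (m : ℕ) (hm : Fintype.card W = m) (k : ℕ)
    (hk : ∃ A : Finset V, IsMinVertexCut G A ∧ CutBound G A k)
    (hkmax : ∀ j : ℕ, (∃ A : Finset V, IsMinVertexCut G A ∧ CutBound G A j) → j ≤ k)
    (g : ℕ) (hg : g + 1 ≤ (k + 1) + k * m + G.minDegree * m) :
    kappaG (edgeCorona G H) g = 1 ↔ kappa G = 1 :=
  edgeCorona_kappaG_eq_one_iff_general G H hGconn m hm k hk g hg

end ExtraConn
end

section
/- Let G and H be connected graphs with H nontrivial, and let F be any subset of the edges of the copy of G inside the edge corona G ◇ H. Then the graph obtained from G ◇ H by deleting the edges in F is connected. -/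
/-!
Only edges of the copy of `G` are deleted, so every edge between `G` and a copy `H_e` survives.
Those edges alone already connect `G ◇ H`: the two ends of an edge `e` of `G` are joined through
any vertex of `H_e` (there is one since `H` is nontrivial), and every vertex of `H_e` is adjacent
to an end of `e`.
-/

open SimpleGraph

namespace ExtraConn

variable {V W : Type*}

/-- The edges of `G ◇ H` between `G` and the copies `H_e`, as a graph on the same vertices. -/
def edgeCoronaSpokes (G : SimpleGraph V) (W : Type*) : SimpleGraph (V ⊕ (G.edgeSet × W)) :=
  SimpleGraph.fromRel fun a b => ∃ u ew, a = .inl u ∧ b = .inr ew ∧ u ∈ (ew.1 : Sym2 V)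

lemma edgeCoronaSpokes_adj_inl_inr {G : SimpleGraph V} {u : V} {ew : G.edgeSet × W}
    (hu : u ∈ (ew.1 : Sym2 V)) : (edgeCoronaSpokes G W).Adj (.inl u) (.inr ew) :=
  ⟨Sum.inl_ne_inr, .inl ⟨u, ew, rfl, rfl, hu⟩⟩

lemma edgeCoronaSpokes_le_deleteEdges (G : SimpleGraph V) (H : SimpleGraph W)
    {F : Set (Sym2 (V ⊕ (G.edgeSet × W)))} (hF : ∀ e ∈ F, ∃ u v : V, e = s(.inl u, .inl v)) :
    edgeCoronaSpokes G W ≤ (edgeCorona G H).deleteEdges F := by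
  rintro _ _ ⟨-, ⟨u, ew, rfl, rfl, hu⟩ | ⟨u, ew, rfl, rfl, hu⟩⟩ <;>
    refine (deleteEdges_adj ..).mpr ⟨hu, fun hmem => ?_⟩ <;>
    obtain ⟨a, b, hab⟩ := hF _ hmem <;>
    simp at hab

lemma edgeCoronaSpokes_exists_reachable_inl {G : SimpleGraph V} (a : V ⊕ (G.edgeSet × W)) :
    ∃ u : V, (edgeCoronaSpokes G W).Reachable a (.inl u) := by
  rcases a with u | ew
  · exact ⟨u, .rfl⟩
  · exact ⟨_, (edgeCoronaSpokes_adj_inl_inr (Sym2.out_fst_mem ew.1.1)).reachable.symm⟩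

section Spokes

variable {G : SimpleGraph V} [Nonempty W]

lemma edgeCoronaSpokes_reachable_inl_of_adj {u v : V} (huv : G.Adj u v) :
    (edgeCoronaSpokes G W).Reachable (.inl u) (.inl v) := by
  let ew : G.edgeSet × W := (⟨s(u, v), huv⟩, Classical.arbitrary W)
  exact (edgeCoronaSpokes_adj_inl_inr (ew := ew) (Sym2.mem_mk_left u v)).reachable.trans
    (edgeCoronaSpokes_adj_inl_inr (ew := ew) (Sym2.mem_mk_right u v)).reachable.symm

lemma edgeCoronaSpokes_reachable_inl_of_reachable {u v : V} (h : G.Reachable u v) :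
    (edgeCoronaSpokes G W).Reachable (.inl u) (.inl v) := by
  obtain ⟨p⟩ := h
  induction p with
  | nil => rfl
  | cons hadj _ ih => exact (edgeCoronaSpokes_reachable_inl_of_adj hadj).trans ih

lemma edgeCoronaSpokes_connected (hG : G.Connected) : (edgeCoronaSpokes G W).Connected := by
  have : Nonempty V := hG.nonempty
  refine (connected_iff _).mpr ⟨fun a b => ?_, inferInstance⟩
  obtain ⟨u, hu⟩ := edgeCoronaSpokes_exists_reachable_inl a
  obtain ⟨v, hv⟩ := edgeCoronaSpokes_exists_reachable_inl b
  exact hu.trans ((edgeCoronaSpokes_reachable_inl_of_reachable (hG u v)).trans hv.symm)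

end Spokes

theorem edgeCorona_deleteEdges_connected_general {V W : Type*}
    (G : SimpleGraph V) (H : SimpleGraph W) [Nontrivial W]
    (hGconn : G.Connected)
    (F : Set (Sym2 (V ⊕ (G.edgeSet × W))))
    (hF : ∀ e ∈ F, ∃ u v : V, G.Adj u v ∧ e = s(Sum.inl u, Sum.inl v)) :
    ((edgeCorona G H).deleteEdges F).Connected := by
  have hF' : ∀ e ∈ F, ∃ u v : V, e = s(.inl u, .inl v) := fun e he => by
    obtain ⟨u, v, -, rfl⟩ := hF e he
    exact ⟨u, v, rfl⟩
  exact (edgeCoronaSpokes_connected hGconn).mono (edgeCoronaSpokes_le_deleteEdges G H hF')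

theorem edgeCorona_deleteEdges_connected {V W : Type*}
    (G : SimpleGraph V) (H : SimpleGraph W) [Nontrivial W]
    (hGconn : G.Connected) (hHconn : H.Connected)
    (F : Set (Sym2 (V ⊕ (G.edgeSet × W))))
    (hF : ∀ e ∈ F, ∃ u v : V, G.Adj u v ∧ e = s(Sum.inl u, Sum.inl v)) :
    ((edgeCorona G H).deleteEdges F).Connected :=
  edgeCorona_deleteEdges_connected_general G H hGconn F hF

end ExtraConn
end
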